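/- arXiv:2410.09924 — 2 statements merged into one kernel-verified Lean document; each statement's English description precedes it below -/
import Mathlib

section
/- Let (Ω, ℙ) be a probability space, let n ≥ 1, and for each j ∈ {0, 1, …, n} let c_j, ĉ_j : Ω → ℝ³ and r_j, r̂_j : Ω → ℝ be measurable maps with r_j(ω) ≥ 0 for all ω. Fix buffers Δ_j ≥ 0 and ε ∈ [0, 1], and suppose the events E_j = {ω : closedBall(c_j(ω), r_j(ω)) ⊆ closedBall(ĉ_j(ω), r̂_j(ω) + Δ_j)}, j = 0, …, n, are measurable, mutually independent, and satisfy ℙ(E_j) ≥ 1 − ε for every j. Let FO : Ω → Set ℝ³ be such that FO(ω) ⊆ ⋃_{j=0}^{n−1} convexHull ℝ (closedBall(c_j(ω), r_j(ω)) ∪ closedBall(c_{j+1}(ω), r_{j+1}(ω))) for every ω, and let SFÔ : Ω → Set ℝ³ be such that ⋃_{j=0}^{n−1} convexHull ℝ (closedBall(ĉ_j(ω), r̂_j(ω) + Δ_j) ∪ closedBall(ĉ_{j+1}(ω), r̂_{j+1}(ω) + Δ_{j+1})) ⊆ SFÔ(ω) for every ω. Let O_1, …, O_m ⊆ ℝ³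 be a finite family of obstacle sets, and suppose that for every ω and every i ∈ {1, …, m}, every point x ∈ SFÔ(ω) satisfies infDist x O_i > 0. Then ℙ({ω : for every i ∈ {1, …, m}, every point x ∈ FO(ω) satisfies infDist x O_i > 0}) ≥ (1 − ε)^{n+1}. -/
open Metric MeasureTheory

/-- Theorem 5 of the paper (abstracted): probabilistic safety guarantee for
conformalized spherical forward occupancy. If each ground-truth joint sphere
is enclosed in its conformalized (buffered) counterpart with probability at
least `1 - ε`, these events are mutually independent, the forward occupancy
`FO` is overapproximated by the ground-truth tapered capsules, the
conformalized tapered capsules are contained in `SFOhat`, and `SFOhat` keeps a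
positive signed distance to every obstacle, then with probability at least
`(1 - ε)^(n+1)` every point of `FO` keeps a positive distance to every
obstacle. -/
theorem crows_probabilistic_safety
    {Ω : Type*} [MeasurableSpace Ω] (μ : Measure Ω) [IsProbabilityMeasure μ]
    (n : ℕ) (hn : 1 ≤ n)
    (c chat : Fin (n + 1) → Ω → EuclideanSpace ℝ (Fin 3))
    (r rhat : Fin (n + 1) → Ω → ℝ)
    (hc : ∀ j, Measurable (c j)) (hchat : ∀ j, Measurable (chat j))
    (hr : ∀ j, Measurable (r j)) (hrhat : ∀ j, Measurable (rhat j))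
    (hrpos : ∀ j ω, 0 ≤ r j ω)
    (Δ : Fin (n + 1) → ℝ) (hΔ : ∀ j, 0 ≤ Δ j)
    (ε : ℝ) (hε0 : 0 ≤ ε) (hε1 : ε ≤ 1)
    (E : Fin (n + 1) → Set Ω)
    (hEdef : ∀ j, E j =
      {ω | closedBall (c j ω) (r j ω) ⊆ closedBall (chat j ω) (rhat j ω + Δ j)})
    (hEm : ∀ j, MeasurableSet (E j))
    (hindep : ∀ J : Finset (Fin (n + 1)), μ (⋂ j ∈ J, E j) = ∏ j ∈ J, μ (E j))
    (hEp : ∀ j, μ (E j) ≥ ENNReal.ofReal (1 - ε))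
    (FO SFOhat : Ω → Set (EuclideanSpace ℝ (Fin 3)))
    (hFO : ∀ ω, FO ω ⊆
      ⋃ j : Fin n,
        convexHull ℝ (closedBall (c j.castSucc ω) (r j.castSucc ω) ∪
          closedBall (c j.succ ω) (r j.succ ω)))
    (hSFO : ∀ ω,
      (⋃ j : Fin n,
        convexHull ℝ (closedBall (chat j.castSucc ω) (rhat j.castSucc ω + Δ j.castSucc) ∪
          closedBall (chat j.succ ω) (rhat j.succ ω + Δ j.succ))) ⊆ SFOhat ω)
    (m : ℕ) (O : Fin m → Set (EuclideanSpace ℝ (Fin 3)))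
    (hsafe : ∀ ω, ∀ i : Fin m, ∀ x ∈ SFOhat ω, 0 < infDist x (O i)) :
    μ {ω | ∀ i : Fin m, ∀ x ∈ FO ω, 0 < infDist x (O i)}
      ≥ ENNReal.ofReal ((1 - ε) ^ (n + 1)) := by
  have hsub : (⋂ j, E j) ⊆ {ω | ∀ i : Fin m, ∀ x ∈ FO ω, 0 < infDist x (O i)} := by
    intro ω hω i x hx
    have hxS : x ∈ SFOhat ω := by
      apply hSFO ω
      obtain ⟨j, hxs⟩ := Set.mem_iUnion.mp (hFO ω hx)
      refine Set.mem_iUnion.mpr ⟨j, ?_⟩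
      refine convexHull_mono (Set.union_subset_union ?_ ?_) hxs
      · have := Set.mem_iInter.mp hω j.castSucc
        rwa [hEdef] at this
      · have := Set.mem_iInter.mp hω j.succ
        rwa [hEdef] at this
    exact hsafe ω i x hxS
  calc ENNReal.ofReal ((1 - ε) ^ (n + 1))
      = ∏ j : Fin (n + 1), ENNReal.ofReal (1 - ε) := by
        rw [Finset.prod_const, Finset.card_univ, Fintype.card_fin,
          ← ENNReal.ofReal_pow (by linarith)]
    _ ≤ ∏ j : Fin (n + 1), μ (E j) := Finset.prod_le_prod' fun j _ => hEp j
    _ = μ (⋂ j ∈ Finset.univ, E j) := (hindep Finset.univ).symm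
    _ = μ (⋂ j, E j) := by simp
    _ ≤ _ := measure_mono hsub
end

section
/- Let N ≥ 1, ε̂ ∈ (0, 1), and set k = ⌈(N + 1)(1 − ε̂)⌉, assuming k ≤ N. Let δ₁, …, δ_N, δ_{N+1} be independent, identically distributed real-valued random variables on a probability space (Ω, ℙ), and for each ω let Δ(ω) be the k-th smallest value among δ₁(ω), …, δ_N(ω) (i.e., the k-th entry of the nondecreasing rearrangement of these N values). Then ℙ({ω : δ_{N+1}(ω) ≤ Δ(ω)}) ≥ 1 − ε̂. -/
/-!
Call the rank of a score the number of scores strictly below it. Among the `N + 1` i.i.d.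
scores at least `k` always have rank `< k`, and by exchangeability each score has rank `< k`
with the same probability `p`; hence `(N + 1) p ≥ k ≥ (N + 1)(1 - ε̂)`. The test score has rank
`< k` exactly when it is at most the `k`-th smallest calibration score.
-/

open MeasureTheory ProbabilityTheory Finset
open scoped ENNReal

/-- The `k`-th smallest value (k-th order statistic, 1-indexed) among
`x 0, …, x (N-1)`: the `k`-th entry of a nondecreasing rearrangement. -/
noncomputable def kthSmallest {N : ℕ} (x : Fin N → ℝ) (k : ℕ) : ℝ :=
  ((List.ofFn x).mergeSort (· ≤ ·)).getD (k - 1) 0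

namespace List.SortedLE

variable {α : Type*} [LinearOrder α] {l : List α}

theorem le_getElem_iff_countP_lt_le (hl : l.SortedLE) {m : ℕ} (hm : m < l.length) (t : α) :
    t ≤ l[m] ↔ l.countP (· < t) ≤ m := by
  constructor
  · intro ht
    have hdrop : (l.drop m).countP (· < t) = 0 := by
      refine List.countP_eq_zero.2 fun a ha => ?_
      obtain ⟨j, hj, rfl⟩ := List.mem_drop_iff_getElem.1 ha
      simpa using ht.trans (hl.getElem_le_getElem_of_le (Nat.le_add_right m j))
    rw [← List.take_append_drop m l, List.countP_append, hdrop]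
    exact List.countP_le_length.trans (by simp)
  · intro hc
    by_contra! hlt
    have htake : (l.take (m + 1)).countP (· < t) = m + 1 := by
      rw [List.countP_eq_length.2 fun a ha => ?_, List.length_take]
      · omega
      obtain ⟨j, hj, rfl⟩ := List.mem_take_iff_getElem.1 ha
      simpa using (hl.getElem_le_getElem_of_le (by omega)).trans_lt hlt
    have := (List.take_sublist (m + 1) l).countP_le (p := (· < t))
    omega

end List.SortedLE

theorem le_kthSmallest_iff {N k : ℕ} (hk : 0 < k) (hkN : k ≤ N) (y : Fin N → ℝ) (t : ℝ) :
    t ≤ kthSmallest y k ↔ #{i | y i < t} < k := by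
  have hperm := List.mergeSort_perm (List.ofFn y) (· ≤ ·)
  have hm : k - 1 < ((List.ofFn y).mergeSort (· ≤ ·)).length := by
    rw [hperm.length_eq, List.length_ofFn]; omega
  have hcount : ((List.ofFn y).mergeSort (· ≤ ·)).countP (· < t) = #{i | y i < t} := by
    rw [hperm.countP_eq, ← Multiset.coe_countP, ← Fin.univ_val_map, Multiset.countP_map]
    rfl
  rw [kthSmallest, List.getD_eq_getElem _ _ hm,
    List.sortedLE_mergeSort.le_getElem_iff_countP_lt_le hm, hcount]
  omega

section Rank

variable {ι α : Type*} [Fintype ι] [LinearOrder α]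

def rank (v : ι → α) (j : ι) : ℕ := #{i | v i < v j}

theorem rank_comp_equiv (v : ι → α) (σ : ι ≃ ι) (j : ι) : rank (v ∘ σ) j = rank v (σ j) :=
  card_equiv σ (by simp)

theorem rank_last {N : ℕ} (v : Fin (N + 1) → α) :
    rank v (Fin.last N) = #{i : Fin N | v i.castSucc < v (Fin.last N)} := by
  simp only [rank, card_filter, Fin.sum_univ_castSucc, lt_irrefl, if_false, add_zero]

theorem le_card_filter_rank_lt {k : ℕ} (hk : k ≤ Fintype.card ι) (v : ι → α) :
    k ≤ #{j | rank v j < k} := by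
  classical
  -- The least value outside the set would have all strictly smaller values inside it.
  by_contra! hT
  obtain ⟨j, hj, hmin⟩ := ({j | rank v j < k} : Finset ι)ᶜ.exists_min_image v
    (by rw [← card_pos, card_compl]; omega)
  have : rank v j ≤ #{j | rank v j < k} := card_le_card fun i hi => by
    by_contra hiT
    exact (mem_filter.1 hi).2.not_ge (hmin i (mem_compl.2 hiT))
  exact mem_compl.1 hj (mem_filter.2 ⟨mem_univ _, this.trans_lt hT⟩)

end Rank

open Classical in
theorem natCast_mul_measure_univ_le_sum_measure {Ω ι : Type*} [MeasurableSpace Ω] [Fintype ι]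
    (μ : Measure Ω) {S : ι → Set Ω} (hS : ∀ i, MeasurableSet (S i)) {k : ℕ}
    (h : ∀ x, k ≤ #{i | x ∈ S i}) :
    k * μ Set.univ ≤ ∑ i, μ (S i) := by
  calc k * μ Set.univ = ∫⁻ _, (k : ℝ≥0∞) ∂μ := (lintegral_const _).symm
    _ ≤ ∫⁻ x, ∑ i, (S i).indicator 1 x ∂μ := lintegral_mono fun x => by
        have := (Nat.cast_le (α := ℝ≥0∞)).2 (h x)
        rw [card_filter, Nat.cast_sum] at this
        simpa only [Set.indicator_apply, Pi.one_apply, Nat.cast_ite, Nat.cast_one,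
          Nat.cast_zero] using this
    _ = ∑ i, μ (S i) := by
        rw [lintegral_finsetSum _ fun i _ => measurable_one.indicator (hS i)]
        simp_rw [lintegral_indicator_one (hS _)]

section Exchangeability

variable {ι α : Type*} [Fintype ι] [LinearOrder α] [MeasurableSpace α]

theorem measure_pi_rank_lt_eq (ν : Measure α) [SigmaFinite ν] (k : ℕ) (j j' : ι) :
    Measure.pi (fun _ : ι => ν) {v | rank v j < k}
      = Measure.pi (fun _ : ι => ν) {v | rank v j' < k} := by
  classical
  let σ := Equiv.swap j j'
  have hσ : MeasurePreserving (MeasurableEquiv.arrowCongr' σ (MeasurableEquiv.refl α))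
      (Measure.pi fun _ : ι => ν) (Measure.pi fun _ : ι => ν) :=
    measurePreserving_arrowCongr' _ _ σ _ fun _ => MeasurePreserving.id ν
  rw [← hσ.measure_preimage_equiv]
  congr 1
  ext v
  change rank (v ∘ σ.symm) j < k ↔ rank v j' < k
  rw [rank_comp_equiv, Equiv.symm_swap, Equiv.swap_apply_left]

variable [TopologicalSpace α] [OrderClosedTopology α] [OpensMeasurableSpace α]
  [SecondCountableTopology α]

theorem measurableSet_rank_lt (j : ι) (k : ℕ) : MeasurableSet {v : ι → α | rank v j < k} := by
  have : Measurable fun v : ι → α => rank v j := by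
    simp_rw [rank, card_filter]
    exact Finset.measurable_sum _ fun i _ => Measurable.ite
      (measurableSet_lt (measurable_pi_apply i) (measurable_pi_apply j)) measurable_const
      measurable_const
  exact this measurableSet_Iio

theorem natCast_le_card_mul_measure_pi_rank_lt (ν : Measure α) [IsProbabilityMeasure ν] {k : ℕ}
    (hk : k ≤ Fintype.card ι) (j : ι) :
    (k : ℝ≥0∞) ≤ Fintype.card ι * Measure.pi (fun _ : ι => ν) {v | rank v j < k} := by
  calc (k : ℝ≥0∞) = k * Measure.pi (fun _ : ι => ν) Set.univ := by simp
    _ ≤ ∑ j', Measure.pi (fun _ : ι => ν) {v | rank v j' < k} :=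
        natCast_mul_measure_univ_le_sum_measure _ (measurableSet_rank_lt · k) fun v => by
          convert le_card_filter_rank_lt hk v using 3; exact Iff.rfl
    _ = Fintype.card ι * Measure.pi (fun _ : ι => ν) {v | rank v j < k} := by
        simp [measure_pi_rank_lt_eq ν k _ j]

end Exchangeability

theorem split_conformal_coverage_general
    {Ω : Type*} [MeasurableSpace Ω] (μ : Measure Ω) [IsProbabilityMeasure μ]
    (N : ℕ) (εhat : ℝ) (hε1 : εhat < 1)
    (k : ℕ) (hk : k = ⌈(N + 1 : ℝ) * (1 - εhat)⌉₊) (hkN : k ≤ N)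
    (δ : Fin (N + 1) → Ω → ℝ)
    (hindep : iIndepFun δ μ)
    (hident : ∀ i j, IdentDistrib (δ i) (δ j) μ μ) :
    μ {ω | δ (Fin.last N) ω ≤ kthSmallest (fun i : Fin N => δ i.castSucc ω) k}
      ≥ ENNReal.ofReal (1 - εhat) := by
  have hk0 : 0 < k := hk ▸ Nat.ceil_pos.2 (mul_pos (by positivity) (by linarith))
  have hδ : ∀ i, AEMeasurable (δ i) μ := fun i => (hident i i).aemeasurable_fst
  have hlaw : μ.map (fun ω i => δ i ω) = Measure.pi fun _ => μ.map (δ 0) := by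
    rw [hindep.map_fun_eq_pi_map hδ]
    exact congrArg Measure.pi (funext fun i => (hident i 0).map_eq)
  have hevent : {ω | δ (Fin.last N) ω ≤ kthSmallest (fun i : Fin N => δ i.castSucc ω) k}
      = (fun ω i => δ i ω) ⁻¹' {v | rank v (Fin.last N) < k} := by
    ext ω
    simp [le_kthSmallest_iff hk0 hkN, rank_last]
  have := Measure.isProbabilityMeasure_map (hδ 0)
  have hbound := natCast_le_card_mul_measure_pi_rank_lt (μ.map (δ 0))
    (by simpa using hkN.trans N.le_succ) (Fin.last N)
  rw [Fintype.card_fin] at hbound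
  rw [hevent, ← Measure.map_apply_of_aemeasurable (aemeasurable_pi_lambda _ hδ)
    (measurableSet_rank_lt _ k), hlaw]
  refine (ENNReal.mul_le_mul_iff_right (Nat.cast_ne_zero.2 N.succ_ne_zero)
    (ENNReal.natCast_ne_top _)).1 (le_trans ?_ hbound)
  calc ((N + 1 : ℕ) : ℝ≥0∞) * ENNReal.ofReal (1 - εhat)
      = ENNReal.ofReal ((N + 1 : ℝ) * (1 - εhat)) := by
        rw [ENNReal.ofReal_mul (by positivity)]; norm_cast
    _ ≤ k := hk ▸ ENNReal.ofReal_le_of_le_toReal (by simpa using Nat.le_ceil _)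

/-- Marginal split-conformal coverage guarantee (eq. (14) of the paper):
a fresh i.i.d. nonconformity score `δ (Fin.last N)` is bounded by the
`⌈(N+1)(1-ε̂)⌉`-th smallest of the `N` calibration scores with probability at
least `1 - ε̂`. -/
theorem split_conformal_coverage
    {Ω : Type*} [MeasurableSpace Ω] (μ : Measure Ω) [IsProbabilityMeasure μ]
    (N : ℕ) (hN : 1 ≤ N) (εhat : ℝ) (hε0 : 0 < εhat) (hε1 : εhat < 1)
    (k : ℕ) (hk : k = ⌈(N + 1 : ℝ) * (1 - εhat)⌉₊) (hkN : k ≤ N)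
    (δ : Fin (N + 1) → Ω → ℝ)
    (hmeas : ∀ i, Measurable (δ i))
    (hindep : iIndepFun δ μ)
    (hident : ∀ i j, IdentDistrib (δ i) (δ j) μ μ) :
    μ {ω | δ (Fin.last N) ω ≤ kthSmallest (fun i : Fin N => δ i.castSucc ω) k}
      ≥ ENNReal.ofReal (1 - εhat) :=
  split_conformal_coverage_general μ N εhat hε1 k hk hkN δ hindep hident
end
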